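/- Let d ≥ 2 be an integer, δ ≥ 1, and let B = (b_1, …, b_{d+1}) ∈ ℝ^{m×(d+1)} be a δ-twin-reduced basis. Then ‖b_1‖ ≤ δ^{2d/(d−1)} · ‖b*_{d+1}‖. -/

import Mathlib

noncomputable section

/-- Euclidean space `ℝ^m`. -/
abbrev Euc (m : ℕ) : Type := EuclideanSpace ℝ (Fin m)

variable {m : ℕ}

/-- `projGS B s` is the orthogonal projection `π_{s+1}` onto the subspace orthogonal to
`b_1, …, b_s` (0-based: orthogonal to `B 0, …, B (s-1)`). -/
def projGS (B : ℕ → Euc m) (s : ℕ) (x : Euc m) : Euc m :=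
  (Submodule.orthogonalProjectionOnto ((Submodule.span ℝ (B '' Set.Iio s))ᗮ) x : Euc m)

/-- The Gram–Schmidt vector `b*_{i+1}` (0-based index `i`). -/
def gsoVec (B : ℕ → Euc m) (i : ℕ) : Euc m := projGS B i (B i)

/-- The projected block `B_{[s+1, s+ℓ]}` (0-based start `s`; the length is supplied
separately to the predicates below). -/
def block (B : ℕ → Euc m) (s : ℕ) : ℕ → Euc m := fun t => projGS B s (B (s + t))

/-- Gram matrix of the first `ℓ` vectors. -/
def gram (B : ℕ → Euc m) (ℓ : ℕ) : Matrix (Fin ℓ) (Fin ℓ) ℝ :=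
  Matrix.of fun i j => (inner ℝ (B i) (B j) : ℝ)

/-- `vol(L(B)) = det(BᵀB)^{1/2}` for the first `ℓ` vectors. -/
def volB (B : ℕ → Euc m) (ℓ : ℕ) : ℝ := Real.sqrt (gram B ℓ).det

/-- The lattice generated by the first `ℓ` vectors. -/
def latticeSpan (B : ℕ → Euc m) (ℓ : ℕ) : Submodule ℤ (Euc m) :=
  Submodule.span ℤ (B '' Set.Iio ℓ)

/-- `λ₁(L)`: the minimum norm of a nonzero lattice vector. -/
def lambda1 (L : Submodule ℤ (Euc m)) : ℝ :=
  sInf {r : ℝ | ∃ x ∈ L, x ≠ 0 ∧ ‖x‖ = r}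

/-- `B` (of rank `ℓ`) is `δ`-SVP-reduced. -/
def SVPReduced (δ : ℝ) (B : ℕ → Euc m) (ℓ : ℕ) : Prop :=
  ‖B 0‖ ≤ δ * lambda1 (latticeSpan B ℓ)

/-- `B` (of rank `ℓ`) is `δ`-HSVP-reduced. -/
def HSVPReduced (δ : ℝ) (B : ℕ → Euc m) (ℓ : ℕ) : Prop :=
  ‖B 0‖ ≤ δ * volB B ℓ ^ ((1 : ℝ) / ℓ)

/-- The dual basis `B^× = B (BᵀB)⁻¹` of the first `ℓ` vectors (extended by `0`). -/
def dualFam (B : ℕ → Euc m) (ℓ : ℕ) : ℕ → Euc m := fun i =>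
  if h : i < ℓ then ∑ j : Fin ℓ, ((gram B ℓ)⁻¹ j ⟨i, h⟩) • B j else 0

/-- The reversed dual basis `B^{-s}`. -/
def revDual (B : ℕ → Euc m) (ℓ : ℕ) : ℕ → Euc m := fun i => dualFam B ℓ (ℓ - 1 - i)

/-- `B` (of rank `ℓ`) is `δ`-DHSVP-reduced: its reversed dual basis is `δ`-HSVP-reduced. -/
def DHSVPReduced (δ : ℝ) (B : ℕ → Euc m) (ℓ : ℕ) : Prop :=
  HSVPReduced δ (revDual B ℓ) ℓ

/-- `B = (b_1, …, b_{d+1})` is `δ`-twin-reduced: `B_{[1,d]}` is `δ`-HSVP-reduced and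
`B_{[2,d+1]}` is `δ`-DHSVP-reduced. -/
def TwinReduced (δ : ℝ) (B : ℕ → Euc m) (d : ℕ) : Prop :=
  HSVPReduced δ (block B 0) d ∧ DHSVPReduced δ (block B 1) d

/-- Gram–Schmidt coefficient `μ_{i,j}` (0-based). -/
def mu (B : ℕ → Euc m) (i j : ℕ) : ℝ :=
  (inner ℝ (B i) (gsoVec B j) : ℝ) / ‖gsoVec B j‖ ^ 2

/-- The first `ℓ` vectors are size-reduced. -/
def SizeReduced (B : ℕ → Euc m) (ℓ : ℕ) : Prop :=
  ∀ i j, j < i → i < ℓ → |mu B i j| ≤ 1 / 2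

/-- The first `ℓ` vectors are `ε`-LLL-reduced. -/
def LLLReduced (ε : ℝ) (B : ℕ → Euc m) (ℓ : ℕ) : Prop :=
  SizeReduced B ℓ ∧
    ∀ i, 0 < i → i < ℓ →
      ‖gsoVec B (i - 1)‖ ^ 2 ≤ (1 + ε) * ‖mu B i (i - 1) • gsoVec B (i - 1) + gsoVec B i‖ ^ 2

/-- `B` (of rank `ℓ`) is `δ`-DSVP-reduced: its reversed dual basis is `δ`-SVP-reduced
and `B` is `(1/3)`-LLL-reduced. -/
def DSVPReduced (δ : ℝ) (B : ℕ → Euc m) (ℓ : ℕ) : Prop :=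
  SVPReduced δ (revDual B ℓ) ℓ ∧ LLLReduced (1 / 3) B ℓ

/-- `γ` is an admissible Hermite bound for rank `r`: every lattice generated by `r`
linearly independent vectors of a Euclidean space satisfies `λ₁² ≤ γ · vol^{2/r}`. -/
def IsHermiteBound (γ : ℝ) (r : ℕ) : Prop :=
  ∀ (m' : ℕ) (v : ℕ → Euc m'), LinearIndependent ℝ (fun i : Fin r => v i) →
    lambda1 (latticeSpan v r) ^ 2 ≤ γ * volB v r ^ ((2 : ℝ) / r)

/-! Write `a = ‖b₁‖`, `g = ‖b*_{d+1}‖`, `P = vol(B_{[1,d]})` and `Q = vol(B_{[2,d+1]})`. Since the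
volume of a block is the product of its Gram–Schmidt norms, `a · Q = vol(L(B)) = P · g`.
HSVP-reduction of `B_{[1,d]}` gives `a ≤ δ P^{1/d}`. The first vector of the reversed dual basis
of `B_{[2,d+1]}` is `b*_{d+1} / ‖b*_{d+1}‖²` and the dual lattice has volume `1/Q`, so
DHSVP-reduction gives `Q^{1/d} ≤ δ g`. Eliminating `P` and `Q` leaves
`a^{1 - 1/d} ≤ δ² g^{1 - 1/d}`. -/

open Submodule InnerProductSpace
open scoped Matrix

section GramSchmidt

variable (B : ℕ → Euc m)

lemma projGS_mem_orthogonal (s : ℕ) (x : Euc m) :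
    projGS B s x ∈ (span ℝ (B '' Set.Iio s))ᗮ :=
  (orthogonalProjectionOnto _ x).2

lemma sub_projGS_mem_span (s : ℕ) (x : Euc m) :
    x - projGS B s x ∈ span ℝ (B '' Set.Iio s) := by
  have := sub_starProjection_mem_orthogonal (K := (span ℝ (B '' Set.Iio s))ᗮ) x
  rwa [orthogonal_orthogonal] at this

variable {B} in
lemma projGS_eq_of_mem {s : ℕ} {x v : Euc m} (hv : v ∈ (span ℝ (B '' Set.Iio s))ᗮ)
    (hxv : x - v ∈ span ℝ (B '' Set.Iio s)) : projGS B s x = v :=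
  eq_starProjection_of_mem_orthogonal hv (by rwa [orthogonal_orthogonal])

lemma block_zero : block B 0 = B := by
  funext t
  exact projGS_eq_of_mem (by simp) (by simp)

lemma gsoVec_zero : gsoVec B 0 = B 0 := congrFun (block_zero B) 0

lemma gsoVec_eq_gramSchmidt : gsoVec B = gramSchmidt ℝ B := by
  funext i
  refine projGS_eq_of_mem ?_ ?_
  · rw [← span_singleton_le_iff_mem, ← isOrtho_iff_le, isOrtho_span]
    rintro _ rfl _ ⟨j, hj, rfl⟩
    exact gramSchmidt_inv_triangular ℝ B hj
  · rw [← span_gramSchmidt_Iio ℝ B i, gramSchmidt_def ℝ B i, sub_sub_cancel]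
    refine sum_mem fun j hj => ?_
    rw [starProjection_singleton]
    exact smul_mem _ _ (subset_span ⟨j, Finset.mem_Iio.1 hj, rfl⟩)

lemma inner_gsoVec_of_ne {i j : ℕ} (h : i ≠ j) : ⟪gsoVec B i, gsoVec B j⟫_ℝ = 0 := by
  rw [gsoVec_eq_gramSchmidt]; exact gramSchmidt_orthogonal ℝ B h

lemma inner_gsoVec_of_lt {i k : ℕ} (h : k < i) : ⟪gsoVec B i, B k⟫_ℝ = 0 := by
  rw [gsoVec_eq_gramSchmidt]; exact gramSchmidt_inv_triangular ℝ B h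

lemma inner_gsoVec_self (i : ℕ) : ⟪gsoVec B i, B i⟫_ℝ = ‖gsoVec B i‖ ^ 2 := by
  have h : ⟪gsoVec B i, B i - gsoVec B i⟫_ℝ = 0 :=
    inner_left_of_mem_orthogonal (sub_projGS_mem_span B i _) (projGS_mem_orthogonal B i _)
  rw [← sub_add_cancel (B i) (gsoVec B i), inner_add_right, h, real_inner_self_eq_norm_sq, zero_add]

lemma gsoVec_mem_span {ℓ i : ℕ} (hi : i < ℓ) : gsoVec B i ∈ span ℝ (B '' Set.Iio ℓ) := by
  rw [gsoVec_eq_gramSchmidt]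
  exact span_mono (Set.image_mono (Set.Iic_subset_Iio.2 hi)) (gramSchmidt_mem_span ℝ B le_rfl)

lemma span_sup_span_block (s t : ℕ) :
    span ℝ (B '' Set.Iio s) ⊔ span ℝ (block B s '' Set.Iio t) = span ℝ (B '' Set.Iio (s + t)) := by
  have hs : span ℝ (B '' Set.Iio s) ≤ span ℝ (B '' Set.Iio (s + t)) :=
    span_mono (Set.image_mono (Set.Iio_subset_Iio (Nat.le_add_right s t)))
  have hB : ∀ j < t, B (s + j) ∈ span ℝ (B '' Set.Iio (s + t)) := fun j hj =>
    subset_span ⟨s + j, by simpa using hj, rfl⟩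
  apply le_antisymm
  · refine sup_le hs (span_le.2 ?_)
    rintro _ ⟨j, hj, rfl⟩
    rw [← sub_sub_cancel (B (s + j)) (block B s j)]
    exact sub_mem (hB j hj) (hs (sub_projGS_mem_span B s _))
  · refine span_le.2 ?_
    rintro _ ⟨k, hk, rfl⟩
    rcases lt_or_ge k s with hks | hks
    · exact mem_sup_left (subset_span ⟨k, hks, rfl⟩)
    obtain ⟨j, rfl⟩ := Nat.exists_eq_add_of_le hks
    rw [← sub_add_cancel (B (s + j)) (block B s j)]
    exact add_mem (mem_sup_left (sub_projGS_mem_span B s _))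
      (mem_sup_right (subset_span ⟨j, by simpa using hk, rfl⟩))

lemma gsoVec_block (s t : ℕ) : gsoVec (block B s) t = gsoVec B (s + t) := by
  have hblock : span ℝ (block B s '' Set.Iio t) ≤ (span ℝ (B '' Set.Iio s))ᗮ :=
    span_le.2 (Set.image_subset_iff.2 fun j _ => projGS_mem_orthogonal B s _)
  have hgso : block B s t - gsoVec (block B s) t ∈ span ℝ (block B s '' Set.Iio t) :=
    sub_projGS_mem_span _ t _
  symm
  refine projGS_eq_of_mem ?_ ?_
  · rw [← span_sup_span_block B s t, ← inf_orthogonal]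
    refine ⟨?_, projGS_mem_orthogonal _ t _⟩
    rw [← sub_sub_cancel (block B s t) (gsoVec (block B s) t)]
    exact sub_mem (projGS_mem_orthogonal B s _) (hblock hgso)
  · rw [← span_sup_span_block B s t, ← sub_add_sub_cancel _ (block B s t)]
    exact add_mem (mem_sup_left (sub_projGS_mem_span B s _)) (mem_sup_right hgso)

end GramSchmidt

section Volume

variable (B : ℕ → Euc m)

lemma eq_gsoVec_add_sum_mu (i : ℕ) :
    B i = gsoVec B i + ∑ j ∈ Finset.range i, mu B i j • gsoVec B j := by
  simpa [mu, gsoVec_eq_gramSchmidt, real_inner_comm, Nat.Iio_eq_range] using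
    gramSchmidt_def'' ℝ B i

def muMatrix (ℓ : ℕ) : Matrix (Fin ℓ) (Fin ℓ) ℝ :=
  Matrix.of fun i j => if (j : ℕ) < i then mu B i j else if (i : ℕ) = j then 1 else 0

lemma det_muMatrix (ℓ : ℕ) : (muMatrix B ℓ).det = 1 := by
  rw [Matrix.det_of_isLowerTriangular _ fun i j (hij : i < j) => ?_]
  · simp [muMatrix]
  · simp [muMatrix, hij.not_gt, Fin.val_ne_of_ne hij.ne]

lemma eq_sum_muMatrix_smul_gsoVec {ℓ : ℕ} (i : Fin ℓ) :
    B i = ∑ j : Fin ℓ, muMatrix B ℓ i j • gsoVec B j := by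
  set c : ℕ → ℝ := fun j => if j < i then mu B i j else if (i : ℕ) = j then 1 else 0
  have hc : ∑ j ∈ Finset.range (i + 1), c j • gsoVec B j = ∑ j ∈ Finset.range ℓ, c j • gsoVec B j :=
    Finset.sum_subset (Finset.range_subset_range.2 i.2) fun j _ hj => by
      have hij : (i : ℕ) < j := by simpa using hj
      simp [c, hij.not_gt, hij.ne]
  have hsum : ∑ j ∈ Finset.range i, c j • gsoVec B j =
      ∑ j ∈ Finset.range i, mu B i j • gsoVec B j :=
    Finset.sum_congr rfl fun j hj => by simp [c, Finset.mem_range.1 hj]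
  calc B i = ∑ j ∈ Finset.range (i + 1), c j • gsoVec B j := by
        rw [Finset.sum_range_succ, hsum, eq_gsoVec_add_sum_mu B i]; simp [c, add_comm]
    _ = ∑ j : Fin ℓ, muMatrix B ℓ i j • gsoVec B j := by
        rw [hc, ← Fin.sum_univ_eq_sum_range]; rfl

lemma gram_eq_muMatrix_mul (ℓ : ℕ) :
    gram B ℓ = muMatrix B ℓ * Matrix.diagonal (fun i : Fin ℓ => ‖gsoVec B i‖ ^ 2) *
      (muMatrix B ℓ)ᵀ := by
  ext i j
  rw [Matrix.mul_apply, gram, Matrix.of_apply, eq_sum_muMatrix_smul_gsoVec B i, sum_inner]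
  refine Finset.sum_congr rfl fun k _ => ?_
  rw [eq_sum_muMatrix_smul_gsoVec B j, inner_sum, Finset.sum_eq_single k]
  · simp only [real_inner_smul_left, real_inner_smul_right, real_inner_self_eq_norm_sq,
      Matrix.mul_diagonal, Matrix.transpose_apply]
    ring
  · intro l _ hlk
    rw [real_inner_smul_left, real_inner_smul_right,
      inner_gsoVec_of_ne B (Fin.val_ne_of_ne hlk.symm)]
    ring
  · simp

lemma det_gram (ℓ : ℕ) : (gram B ℓ).det = ∏ i : Fin ℓ, ‖gsoVec B i‖ ^ 2 := by
  rw [gram_eq_muMatrix_mul, Matrix.det_mul, Matrix.det_mul, Matrix.det_transpose, det_muMatrix,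
    Matrix.det_diagonal, one_mul, mul_one]

lemma volB_eq_prod (ℓ : ℕ) : volB B ℓ = ∏ i : Fin ℓ, ‖gsoVec B i‖ := by
  rw [volB, det_gram, Finset.prod_pow, Real.sqrt_sq (by positivity)]

lemma linearIndependent_iff_gsoVec_ne_zero (ℓ : ℕ) :
    LinearIndependent ℝ (fun i : Fin ℓ => B i) ↔ ∀ i < ℓ, gsoVec B i ≠ 0 := by
  rw [← Matrix.det_gram_ne_zero_iff_linearIndependent]
  change (gram B ℓ).det ≠ 0 ↔ _
  simp [det_gram, Finset.prod_eq_zero_iff, Fin.forall_iff]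

variable {B} in
lemma volB_pos {ℓ : ℕ} (hB : LinearIndependent ℝ (fun i : Fin ℓ => B i)) : 0 < volB B ℓ := by
  rw [linearIndependent_iff_gsoVec_ne_zero] at hB
  rw [volB_eq_prod]
  exact Finset.prod_pos fun i _ => norm_pos_iff.2 (hB i i.2)

lemma linearIndependent_block {B : ℕ → Euc m} {s ℓ : ℕ}
    (hB : LinearIndependent ℝ (fun i : Fin (s + ℓ) => B i)) :
    LinearIndependent ℝ (fun i : Fin ℓ => block B s i) := by
  rw [linearIndependent_iff_gsoVec_ne_zero] at hB ⊢
  intro i hi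
  rw [gsoVec_block]
  exact hB _ (by omega)

lemma volB_succ (ℓ : ℕ) : volB B (ℓ + 1) = volB B ℓ * ‖gsoVec B ℓ‖ := by
  simp [volB_eq_prod, Fin.prod_univ_castSucc]

lemma volB_succ_eq_norm_mul_volB_block (ℓ : ℕ) : volB B (ℓ + 1) = ‖B 0‖ * volB (block B 1) ℓ := by
  simp [volB_eq_prod, Fin.prod_univ_succ, gsoVec_block, gsoVec_zero, add_comm]

end Volume

section Dual

variable {B : ℕ → Euc m} {ℓ : ℕ}

lemma eq_of_mem_span_of_inner_eq {u v : Euc m} (hu : u ∈ span ℝ (B '' Set.Iio ℓ))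
    (hv : v ∈ span ℝ (B '' Set.Iio ℓ)) (h : ∀ k < ℓ, ⟪u, B k⟫_ℝ = ⟪v, B k⟫_ℝ) : u = v := by
  have horth : u - v ∈ (span ℝ (B '' Set.Iio ℓ))ᗮ := by
    rw [← span_singleton_le_iff_mem, ← isOrtho_iff_le, isOrtho_span]
    rintro _ rfl _ ⟨k, hk, rfl⟩
    rw [inner_sub_left, h k hk, sub_self]
  have := mem_inf.2 ⟨sub_mem hu hv, horth⟩
  rwa [inf_orthogonal_eq_bot, mem_bot, sub_eq_zero] at this

lemma isUnit_det_gram (hB : LinearIndependent ℝ (fun i : Fin ℓ => B i)) : IsUnit (gram B ℓ).det :=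
  (Matrix.det_gram_ne_zero_iff_linearIndependent.2 hB).isUnit

lemma dualFam_mem_span (i : ℕ) : dualFam B ℓ i ∈ span ℝ (B '' Set.Iio ℓ) := by
  unfold dualFam
  split_ifs
  · exact sum_mem fun j _ => smul_mem _ _ (subset_span ⟨j, j.2, rfl⟩)
  · exact zero_mem _

lemma inner_dualFam (hdet : IsUnit (gram B ℓ).det) (i k : Fin ℓ) :
    ⟪dualFam B ℓ i, B k⟫_ℝ = if k = i then 1 else 0 := by
  rw [dualFam, dif_pos i.2, sum_inner, ← Matrix.one_apply, ← Matrix.mul_nonsing_inv _ hdet,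
    Matrix.mul_apply]
  refine Finset.sum_congr rfl fun j _ => ?_
  rw [real_inner_smul_left, gram, Matrix.of_apply, real_inner_comm, mul_comm]

lemma dualFam_pred (hB : LinearIndependent ℝ (fun i : Fin ℓ => B i)) (hℓ : 0 < ℓ) :
    dualFam B ℓ (ℓ - 1) = (‖gsoVec B (ℓ - 1)‖ ^ 2)⁻¹ • gsoVec B (ℓ - 1) := by
  have hlast : ℓ - 1 < ℓ := Nat.sub_lt hℓ one_pos
  have hg : gsoVec B (ℓ - 1) ≠ 0 := (linearIndependent_iff_gsoVec_ne_zero B ℓ).1 hB _ hlast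
  refine eq_of_mem_span_of_inner_eq (dualFam_mem_span _) (smul_mem _ _ (gsoVec_mem_span B hlast))
    fun k hk => ?_
  rw [inner_dualFam (isUnit_det_gram hB) ⟨ℓ - 1, hlast⟩ ⟨k, hk⟩, real_inner_smul_left]
  rcases (Nat.le_sub_one_of_lt hk).lt_or_eq with hk' | rfl
  · rw [inner_gsoVec_of_lt B hk', mul_zero, if_neg (by simp [hk'.ne])]
  · rw [inner_gsoVec_self, if_pos rfl, inv_mul_cancel₀ (by simpa using hg)]

lemma norm_revDual_zero (hB : LinearIndependent ℝ (fun i : Fin ℓ => B i)) (hℓ : 0 < ℓ) :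
    ‖revDual B ℓ 0‖ = ‖gsoVec B (ℓ - 1)‖⁻¹ := by
  have hg : ‖gsoVec B (ℓ - 1)‖ ≠ 0 :=
    norm_ne_zero_iff.2 ((linearIndependent_iff_gsoVec_ne_zero B ℓ).1 hB _ (Nat.sub_lt hℓ one_pos))
  rw [revDual, Nat.sub_zero, dualFam_pred hB hℓ, norm_smul, norm_inv, norm_pow, norm_norm]
  field_simp

lemma inner_dualFam_dualFam (hdet : IsUnit (gram B ℓ).det) (i j : Fin ℓ) :
    ⟪dualFam B ℓ i, dualFam B ℓ j⟫_ℝ = (gram B ℓ)⁻¹ i j := by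
  conv_lhs => rw [dualFam, dif_pos i.2]
  simp_rw [sum_inner, real_inner_smul_left, real_inner_comm (dualFam B ℓ j), inner_dualFam hdet,
    mul_ite, mul_one, mul_zero, Finset.sum_ite_eq', Finset.mem_univ, if_true]
  exact (Matrix.isHermitian_gram ℝ fun i : Fin ℓ => B i).inv.apply i j

lemma volB_revDual (hB : LinearIndependent ℝ (fun i : Fin ℓ => B i)) :
    volB (revDual B ℓ) ℓ = (volB B ℓ)⁻¹ := by
  have hgram : gram (revDual B ℓ) ℓ = ((gram B ℓ)⁻¹).submatrix Fin.revPerm Fin.revPerm := by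
    ext i j
    have hrev : ∀ i : Fin ℓ, ℓ - 1 - (i : ℕ) = (Fin.rev i : ℕ) := fun i => by
      rw [Fin.val_rev]; omega
    simp only [gram, revDual, Matrix.of_apply, Matrix.submatrix_apply, hrev]
    exact inner_dualFam_dualFam (isUnit_det_gram hB) _ _
  rw [volB, volB, hgram, Matrix.det_submatrix_equiv_self, Matrix.det_nonsing_inv,
    Ring.inverse_eq_inv, Real.sqrt_inv]

end Dual

lemma le_rpow_mul_of_volume_bounds {d : ℕ} (hd : 2 ≤ d) {δ a g P Q : ℝ} (ha : 0 < a) (hg : 0 < g)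
    (hQ : 0 < Q) (hvol : a * Q = P * g) (hP_bound : a ≤ δ * P ^ ((1 : ℝ) / d))
    (hQ_bound : g⁻¹ ≤ δ * Q⁻¹ ^ ((1 : ℝ) / d)) :
    a ≤ δ ^ (2 * (d : ℝ) / ((d : ℝ) - 1)) * g := by
  set r : ℝ := 1 / d
  have hd' : (2 : ℝ) ≤ d := by exact_mod_cast hd
  have ht : 0 < 1 - r := by
    rw [sub_pos, div_lt_one (by linarith)]; linarith
  have hP : P = a * Q / g := by rw [hvol, mul_div_cancel_right₀ _ hg.ne']
  have hδ : 0 < δ := (pos_iff_pos_of_mul_pos (ha.trans_le hP_bound)).2 (by rw [hP]; positivity)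
  have hQr : Q ^ r ≤ δ * g := by
    rw [Real.inv_rpow hQ.le, ← div_eq_mul_inv, le_div_iff₀ (by positivity), inv_mul_le_iff₀ hg]
      at hQ_bound
    linarith
  have ha_rpow : a ^ r * a ^ (1 - r) ≤ a ^ r * (δ ^ 2 * g ^ (1 - r)) := by
    rw [← Real.rpow_add ha, add_sub_cancel, Real.rpow_one]
    calc a ≤ δ * P ^ r := hP_bound
      _ = δ * a ^ r * Q ^ r / g ^ r := by
        rw [hP, Real.div_rpow (by positivity) hg.le, Real.mul_rpow ha.le hQ.le]; ring
      _ ≤ δ * a ^ r * (δ * g) / g ^ r := by gcongr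
      _ = a ^ r * (δ ^ 2 * g ^ (1 - r)) := by
        rw [Real.rpow_sub hg, Real.rpow_one]; field_simp
  have hpow : (δ ^ (2 / (1 - r)) * g) ^ (1 - r) = δ ^ 2 * g ^ (1 - r) := by
    rw [Real.mul_rpow (by positivity) hg.le, ← Real.rpow_mul hδ.le, div_mul_cancel₀ _ ht.ne',
      Real.rpow_two]
  have hexp : 2 / (1 - r) = 2 * (d : ℝ) / ((d : ℝ) - 1) := by
    have : (d : ℝ) - 1 ≠ 0 := by linarith
    simp only [r]; field_simp
  rw [← hexp, ← Real.rpow_le_rpow_iff ha.le (by positivity) ht, hpow]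
  exact le_of_mul_le_mul_left ha_rpow (by positivity)

theorem twin_reduced_decay_general {m d : ℕ} (hd : 2 ≤ d) {δ : ℝ}
    (B : ℕ → Euc m) (hB : LinearIndependent ℝ (fun i : Fin (d + 1) => B i))
    (hTwin : TwinReduced δ B d) :
    ‖B 0‖ ≤ δ ^ ((2 * (d : ℝ)) / ((d : ℝ) - 1)) * ‖gsoVec B d‖ := by
  obtain ⟨hHSVP, hDHSVP⟩ := hTwin
  have hgso := (linearIndependent_iff_gsoVec_ne_zero B (d + 1)).1 hB
  have hC : LinearIndependent ℝ (fun i : Fin d => block B 1 i) :=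
    linearIndependent_block (by rwa [add_comm])
  rw [HSVPReduced, block_zero] at hHSVP
  rw [DHSVPReduced, HSVPReduced, norm_revDual_zero hC (by omega), gsoVec_block,
    Nat.add_sub_of_le (by omega), volB_revDual hC] at hDHSVP
  refine le_rpow_mul_of_volume_bounds hd ?_ (norm_pos_iff.2 (hgso d (by omega))) (volB_pos hC) ?_
    hHSVP hDHSVP
  · rw [← gsoVec_zero B, norm_pos_iff]; exact hgso 0 (by omega)
  · rw [← volB_succ_eq_norm_mul_volB_block, volB_succ]

/-- if `B = (b_1, …, b_{d+1})` is a `δ`-twin-reduced basis with `d ≥ 2`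
and `δ ≥ 1`, then `‖b_1‖ ≤ δ^{2d/(d-1)} ‖b*_{d+1}‖`. -/
theorem twin_reduced_decay {m d : ℕ} (hd : 2 ≤ d) {δ : ℝ} (hδ : 1 ≤ δ)
    (B : ℕ → Euc m) (hB : LinearIndependent ℝ (fun i : Fin (d + 1) => B i))
    (hTwin : TwinReduced δ B d) :
    ‖B 0‖ ≤ δ ^ ((2 * (d : ℝ)) / ((d : ℝ) - 1)) * ‖gsoVec B d‖ :=
  twin_reduced_decay_general hd B hB hTwin
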